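/- arXiv:1807.00469 — 3 statements merged into one kernel-verified Lean document; each statement's English description precedes it below -/
import Mathlib

section
/- On the tangent bundle of the universal cover of h_reg for an ADE root system, the Coxeter-KZ connection coincides with the Dubrovin connection: ∇^{CKZ}_{ν,e_i} e_j = ν · ∂_i * ∂_j, i.e. −ν Σ_{α∈Δ_+}(r_α(e_j) − e_j)·α(e_i)/α(p) = ν Σ_{α∈Δ_+} Σ_{k,l} (α(e_i)α(e_j)α(e_k)/α(p)) G^{kl} e_l, using e_j − r_α(e_j) = α(e_j) Σ_{k,l} α(e_k) G^{kl} e_l. -/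
/- On the tangent bundle of the universal cover of h_reg for an ADE root system,
   the Coxeter-KZ connection coincides with the Dubrovin connection:
   ∇^{CKZ}_{ν,e_i} e_j = ν · ∂_i * ∂_j. -/

noncomputable section

/-- The dual basis vector `e_i` of the Cartan algebra `h = Fin n → ℂ`. -/
def eVec {n : ℕ} (i : Fin n) : Fin n → ℂ := Pi.single i 1

/-- The coroot `α^∨ = Σ_{k,l} α(e_k) G^{kl} e_l` of a root `α`, with respect to
the inverse metric `G^{kl}`. -/
def coroot {n : ℕ} (Ginv : Fin n → Fin n → ℂ) (a : (Fin n → ℂ) →ₗ[ℂ] ℂ) :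
    Fin n → ℂ :=
  ∑ k, ∑ l, (a (eVec k) * Ginv k l) • eVec l

/-- The reflection `r_α(v) = v − α(v)·α^∨`. -/
def reflRoot {n : ℕ} (Ginv : Fin n → Fin n → ℂ) (a : (Fin n → ℂ) →ₗ[ℂ] ℂ)
    (v : Fin n → ℂ) : Fin n → ℂ :=
  v - a v • coroot Ginv a

/-- The Coxeter-KZ connection on the tangent bundle coincides with the Dubrovin
connection: at every regular point `p`,
`−ν Σ_{α∈Δ₊} (r_α(e_j) − e_j)·α(e_i)/α(p)
   = ν Σ_{α∈Δ₊} Σ_{k,l} (α(e_i)α(e_j)α(e_k)/α(p))·G^{kl}·e_l`,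
i.e. `∇^{CKZ}_{ν,e_i} e_j = ν · ∂_i * ∂_j` for the Frobenius multiplication with
structure constants `C_{ijk}(p) = Σ_{α∈Δ₊} α(e_i)α(e_j)α(e_k)/α(p)`. -/
theorem CKZ_eq_Dubrovin {n : ℕ} (ν : ℂ) (Δ : Finset ((Fin n → ℂ) →ₗ[ℂ] ℂ))
    (Ginv : Fin n → Fin n → ℂ) (p : Fin n → ℂ)
    (hreg : ∀ a ∈ Δ, a p ≠ 0) (i j : Fin n) :
    (-ν) • ∑ a ∈ Δ, (a (eVec i) / a p) • (reflRoot Ginv a (eVec j) - eVec j)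
      = ν • ∑ a ∈ Δ, ∑ k, ∑ l,
          (a (eVec i) * a (eVec j) * a (eVec k) / a p * Ginv k l) • eVec l := by
  rw [Finset.smul_sum, Finset.smul_sum]
  refine Finset.sum_congr rfl fun a ha => ?_
  have h : reflRoot Ginv a (eVec j) - eVec j = (-(a (eVec j))) • coroot Ginv a := by
    rw [reflRoot, sub_sub_cancel_left, neg_smul]
  rw [h]
  simp only [coroot, Finset.smul_sum, smul_smul]
  refine Finset.sum_congr rfl fun k _ => ?_
  refine Finset.sum_congr rfl fun l _ => ?_
  congr 1
  field_simp

end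
end

section
/- Suppose the stability condition σ̂ = (Ẑ, P̂) on the 𝕏-baric heart D_∞ of a Calabi-Yau-𝕏 category satisfies Re(s) ≥ gldim σ̂. Then the induced pre-slicing P(φ) = add ⊕_{k∈ℤ} P̂(φ − k·Re(s))[k𝕏] satisfies Hom(P(φ_1), P(φ_2)) = 0 for all φ_1 > φ_2. -/
/- If the stability condition σ̂ = (Ẑ, P̂) on the 𝕏-baric heart D_∞ satisfies
   Re(s) ≥ gldim σ̂, then the induced pre-slicing
   P(φ) = add ⊕_{k∈ℤ} P̂(φ − k·Re(s))[k𝕏] satisfies Hom(P(φ₁), P(φ₂)) = 0 for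
   φ₁ > φ₂. -/

open CategoryTheory Limits

/-- The additive closure `add S` of a set `S` of objects: all finite direct
sums of objects of `S`. -/
def addClosure {C : Type*} [Category C] [Preadditive C] [HasFiniteBiproducts C]
    (S : Set C) : Set C :=
  {X | ∃ (m : ℕ) (f : Fin m → C), (∀ i, f i ∈ S) ∧ Nonempty (X ≅ ⨁ f)}

/-- Hom-vanishing for the induced pre-slicing on a Calabi-Yau-𝕏 category.

Here `P k ψ` denotes the shifted semistable subcategory `P̂(ψ)[k𝕏]` of the
stability condition `σ̂ = (Ẑ, P̂)` on the 𝕏-baric heart `D_∞`, and `t = Re(s)`.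
The hypotheses encode:
* `horth` : baric orthogonality `Hom(D_∞[k₁𝕏], D_∞[k₂𝕏]) = 0` unless
  `k₂ − k₁ ∈ {0,1}` (Calabi-Yau-𝕏 refinement);
* `hslice` : the Hom-vanishing of the slicing `P̂` within each copy `D_∞[k𝕏]`;
* `hserre` : Serre duality `Hom(A, B[𝕏]) ≅ Hom(B, A)^∨` for `A, B ∈ D_∞`;
* `hgl` : the assumption `Re(s) ≥ gldim σ̂`, i.e. a nonzero Hom from phase `ψ₁`
  to phase `ψ₂` (same baric degree) forces `ψ₂ − ψ₁ ≤ t`.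

Conclusion: the induced pre-slicing
`P(φ) = add ⊕_{k∈ℤ} P̂(φ − k·t)[k𝕏]` satisfies `Hom(P(φ₁), P(φ₂)) = 0` for all
`φ₁ > φ₂`. -/
theorem induced_preslicing_hom_vanishing {C : Type*} [Category C] [Preadditive C]
    [HasFiniteBiproducts C]
    (P : ℤ → ℝ → Set C) (t : ℝ)
    (horth : ∀ k₁ k₂ : ℤ, k₂ - k₁ ∉ ({0, 1} : Set ℤ) → ∀ ψ₁ ψ₂ : ℝ,
      ∀ A ∈ P k₁ ψ₁, ∀ B ∈ P k₂ ψ₂, ∀ f : A ⟶ B, f = 0)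
    (hslice : ∀ (k : ℤ) (ψ₁ ψ₂ : ℝ), ψ₁ > ψ₂ →
      ∀ A ∈ P k ψ₁, ∀ B ∈ P k ψ₂, ∀ f : A ⟶ B, f = 0)
    (hserre : ∀ (k : ℤ) (ψ₁ ψ₂ : ℝ),
      (∃ A ∈ P k ψ₁, ∃ B ∈ P (k + 1) ψ₂, ∃ f : A ⟶ B, f ≠ 0) →
      (∃ B ∈ P k ψ₂, ∃ A ∈ P k ψ₁, ∃ g : B ⟶ A, g ≠ 0))
    (hgl : ∀ (k : ℤ) (ψ₁ ψ₂ : ℝ),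
      (∃ A ∈ P k ψ₁, ∃ B ∈ P k ψ₂, ∃ f : A ⟶ B, f ≠ 0) → ψ₂ - ψ₁ ≤ t)
    (φ₁ φ₂ : ℝ) (h : φ₁ > φ₂)
    (A : C) (hA : A ∈ addClosure (⋃ k : ℤ, P k (φ₁ - k * t)))
    (B : C) (hB : B ∈ addClosure (⋃ k : ℤ, P k (φ₂ - k * t)))
    (f : A ⟶ B) : f = 0 := by
  -- Key componentwise vanishing
  have key : ∀ (k₁ k₂ : ℤ) (X Y : C), X ∈ P k₁ (φ₁ - k₁ * t) →
      Y ∈ P k₂ (φ₂ - k₂ * t) → ∀ g : X ⟶ Y, g = 0 := by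
    intro k₁ k₂ X Y hX hY g
    by_cases hk : k₂ - k₁ ∈ ({0, 1} : Set ℤ)
    · rcases hk with hk | hk
      · -- k₂ = k₁ : use the slicing vanishing
        have hk' : k₂ = k₁ := by omega
        subst hk'
        exact hslice k₂ _ _ (by linarith) X hX Y hY g
      · -- k₂ = k₁ + 1 : use Serre duality and gldim bound
        have hk' : k₂ = k₁ + 1 := by
          have : k₂ - k₁ = 1 := by simpa using hk
          omega
        subst hk'
        by_contra hg
        obtain ⟨B', hB', A', hA', g', hg'⟩ :=
          hserre k₁ (φ₁ - k₁ * t) (φ₂ - (k₁ + 1) * t)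
            ⟨X, hX, Y, by convert hY using 2; push_cast; ring, g, hg⟩
        have := hgl k₁ _ _ ⟨B', hB', A', hA', g', hg'⟩
        push_cast at this
        nlinarith
    · exact horth k₁ k₂ hk _ _ X hX Y hY g
  obtain ⟨m, a, ha, ⟨eA⟩⟩ := hA
  obtain ⟨n, b, hb, ⟨eB⟩⟩ := hB
  have : eA.inv ≫ f ≫ eB.hom = 0 := by
    apply biproduct.hom_ext
    intro j
    apply biproduct.hom_ext'
    intro i
    obtain ⟨k₁, hai⟩ := Set.mem_iUnion.mp (ha i)
    obtain ⟨k₂, hbj⟩ := Set.mem_iUnion.mp (hb j)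
    rw [zero_comp, comp_zero]
    exact key k₁ k₂ _ _ hai hbj _
  calc f = eA.hom ≫ (eA.inv ≫ f ≫ eB.hom) ≫ eB.inv := by simp
    _ = 0 := by rw [this]; simp
end

section
/- In the A_2 case the composite functor τ_𝕏 = Φ_1 ∘ Φ_2 ∘ [𝕏−2] of spherical twists acts on the Grothendieck group K(D_𝕏(A_2)) ≅ R α_1 ⊕ R α_2 (where 𝕏 acts as multiplication by q and [1] as multiplication by −1) by an operator [τ_𝕏] satisfying ([τ_𝕏])^3 = id on K(D_𝕏(A_2)). -/
/- For the A_2 quiver, the class of τ_𝕏 = Φ_1 ∘ Φ_2 ∘ [𝕏−2] on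
   K(D_𝕏(A_2)) ≅ Rα_1 ⊕ Rα_2 satisfies ([τ_𝕏])³ = id. -/

open LaurentPolynomial

noncomputable section

abbrev Rq : Type := LaurentPolynomial ℤ

def qv : Rq := T 1

def qvInv : Rq := T (-1)

/-- Arrow counts of the `A_2` quiver `1 → 2`. -/
def bA2 : Fin 2 → Fin 2 → ℕ := fun i j => if i = 0 ∧ j = 1 then 1 else 0

/-- The `q`-deformed Cartan matrix entry of `A_2` at the value `qval`
(so `(α_1,α_1)_q = (α_2,α_2)_q = 1+q`, `(α_1,α_2)_q = −1`, `(α_2,α_1)_q = −q`). -/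
def aA2 (qval : Rq) (i j : Fin 2) : Rq :=
  ((if i = j then 1 else 0) + qval * (if j = i then 1 else 0))
    - ((bA2 i j : Rq) + qval * (bA2 j i : Rq))

/-- The basis class `α_i = [S_i]` of `K(D_𝕏(A_2)) ≅ Rα_1 ⊕ Rα_2`. -/
def alphaA2 (i : Fin 2) : Fin 2 → Rq := Pi.single i 1

/-- The spherical twist class `[Φ_i]`, the inverse of
`[Φ_i]⁻¹(α) = α − (α, α_i)_q α_i`, given by `[Φ_i](α) = α − (α_i, α)_{q⁻¹} α_i`. -/
def PhiA2 (i : Fin 2) (α : Fin 2 → Rq) : Fin 2 → Rq :=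
  α - (∑ j, aA2 qvInv i j * α j) • alphaA2 i

/-- The class `[τ_𝕏]` of `τ_𝕏 = Φ_1 ∘ Φ_2 ∘ [𝕏−2]` on the Grothendieck group:
since `[𝕏]` acts by `q` and `[1]` by `−1`, `[𝕏−2]` acts by `q·(−1)^{-2} = q`,
so `[τ_𝕏] = q·[Φ_1]∘[Φ_2]`. -/
def tauA2 (α : Fin 2 → Rq) : Fin 2 → Rq :=
  qv • PhiA2 0 (PhiA2 1 α)

/-- On `K(D_𝕏(A_2))`, the cube of `[τ_𝕏]` is the identity: `([τ_𝕏])³ = id`. -/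
theorem tauA2_cube_eq_id (α : Fin 2 → Rq) :
    tauA2 (tauA2 (tauA2 α)) = α := by
  have hq : qv * qvInv = 1 := by
    rw [qv, qvInv, ← T_add]; norm_num
  funext i
  fin_cases i <;>
  · simp [tauA2, PhiA2, aA2, bA2, alphaA2, Fin.sum_univ_two, Pi.single,
      Function.update, smul_eq_mul]
    ring_nf
    rw [mul_right_comm, ← mul_pow, hq, one_pow, one_mul]

end
end
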